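/- Let d ≥ 1, n = d(d+1), and let b_1, …, b_n be unit vectors in ℂ^d such that for every j ≠ k, |⟨b_j, b_k⟩|² equals either 0 or 1/d. Then the number of unordered pairs {j,k}, j ≠ k, with ⟨b_j, b_k⟩ = 0 is at most (d+1)·d(d-1)/2. -/

import Mathlib

/-!
The Gram matrix `AᴴA` of the vectors and their frame operator `AAᴴ` have the same Frobenius
norm, and `(tr AAᴴ)² ≤ d ‖AAᴴ‖²_F` by Cauchy–Schwarz on the diagonal. This gives the frame
bound `n² ≤ d ∑_{j,k} |⟨b_j, b_k⟩|²`. Under the angle condition the right-hand side is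
`d n + #(non-orthogonal ordered pairs)`, so with `n = d(d+1)` at most `n(d-1)` ordered pairs
are orthogonal.
-/

open Finset Matrix RCLike
open scoped InnerProductSpace

namespace Matrix

variable {m n 𝕜 : Type*} [Fintype m] [Fintype n] [RCLike 𝕜]

theorem re_trace_conjTranspose_mul_self (A : Matrix m n 𝕜) :
    re (Aᴴ * A).trace = ∑ i, ∑ j, ‖A i j‖ ^ 2 := by
  rw [Finset.sum_comm]
  simp [trace, mul_apply, RCLike.conj_mul]

theorem sum_norm_sq_conjTranspose_mul_self (A : Matrix m n 𝕜) :
    ∑ i, ∑ j, ‖(Aᴴ * A) i j‖ ^ 2 = ∑ i, ∑ j, ‖(A * Aᴴ) i j‖ ^ 2 := by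
  rw [← re_trace_conjTranspose_mul_self, ← re_trace_conjTranspose_mul_self, conjTranspose_mul,
    conjTranspose_mul, conjTranspose_conjTranspose, ← Matrix.mul_assoc, trace_mul_comm]
  simp only [Matrix.mul_assoc]

theorem sq_re_trace_le_card_mul_sum_norm_sq (M : Matrix n n 𝕜) :
    re M.trace ^ 2 ≤ Fintype.card n * ∑ i, ∑ j, ‖M i j‖ ^ 2 :=
  calc re M.trace ^ 2 = (∑ i, re (M i i)) ^ 2 := by simp [trace]
    _ ≤ Fintype.card n * ∑ i, re (M i i) ^ 2 := sq_sum_le_card_mul_sum_sq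
    _ ≤ Fintype.card n * ∑ i, ∑ j, ‖M i j‖ ^ 2 := by
      gcongr with i
      calc re (M i i) ^ 2 ≤ ‖M i i‖ ^ 2 := by
            rw [← sq_abs]; gcongr; exact abs_re_le_norm _
        _ ≤ ∑ j, ‖M i j‖ ^ 2 :=
          single_le_sum (f := fun j ↦ ‖M i j‖ ^ 2) (fun _ _ ↦ by positivity) (mem_univ i)

end Matrix

theorem sq_sum_norm_sq_le_finrank_mul_sum_norm_inner_sq {𝕜 E ι : Type*} [RCLike 𝕜]
    [NormedAddCommGroup E] [InnerProductSpace 𝕜 E] [FiniteDimensional 𝕜 E] [Fintype ι]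
    (v : ι → E) :
    (∑ j, ‖v j‖ ^ 2) ^ 2 ≤ Module.finrank 𝕜 E * ∑ j, ∑ k, ‖⟪v j, v k⟫_𝕜‖ ^ 2 := by
  set e := stdOrthonormalBasis 𝕜 E
  set A : Matrix (Fin (Module.finrank 𝕜 E)) ι 𝕜 := of fun i j ↦ e.repr (v j) i
  have hgram : gram 𝕜 v = Aᴴ * A := gram_eq_conjTranspose_mul e v
  have hnorm : ∑ j, ‖v j‖ ^ 2 = re (A * Aᴴ).trace := by
    rw [trace_mul_comm, re_trace_conjTranspose_mul_self, sum_comm]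
    congr! 1 with j
    rw [← e.repr.norm_map, EuclideanSpace.norm_sq_eq]
    rfl
  calc (∑ j, ‖v j‖ ^ 2) ^ 2 = re (A * Aᴴ).trace ^ 2 := by rw [hnorm]
    _ ≤ Fintype.card (Fin (Module.finrank 𝕜 E)) * ∑ i, ∑ j, ‖(A * Aᴴ) i j‖ ^ 2 :=
      sq_re_trace_le_card_mul_sum_norm_sq _
    _ = Module.finrank 𝕜 E * ∑ j, ∑ k, ‖⟪v j, v k⟫_𝕜‖ ^ 2 := by
      rw [← sum_norm_sq_conjTranspose_mul_self, ← hgram, Fintype.card_fin]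
      rfl

section OrthogonalityGraph

variable {E ι : Type*} [NormedAddCommGroup E]

def orthogonalityGraph (𝕜 : Type*) [RCLike 𝕜] [InnerProductSpace 𝕜 E] (v : ι → E) :
    SimpleGraph ι where
  Adj j k := j ≠ k ∧ ⟪v j, v k⟫_𝕜 = 0
  symm := ⟨fun _ _ h ↦ ⟨h.1.symm, inner_eq_zero_symm.mp h.2⟩⟩
  loopless := ⟨fun _ h ↦ h.1 rfl⟩

variable (𝕜 : Type*) [RCLike 𝕜] [InnerProductSpace 𝕜 E]

@[simp]
theorem orthogonalityGraph_adj (v : ι → E) (j k : ι) :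
    (orthogonalityGraph 𝕜 v).Adj j k ↔ j ≠ k ∧ ⟪v j, v k⟫_𝕜 = 0 :=
  Iff.rfl

theorem edgeSet_orthogonalityGraph (v : ι → E) :
    (orthogonalityGraph 𝕜 v).edgeSet = {s | ∃ j k, j ≠ k ∧ s = s(j, k) ∧ ⟪v j, v k⟫_𝕜 = 0} := by
  ext s
  refine Sym2.ind (fun j k ↦ ?_) s
  constructor
  · intro h
    rw [SimpleGraph.mem_edgeSet, orthogonalityGraph_adj] at h
    exact ⟨j, k, h.1, rfl, h.2⟩
  · rintro ⟨j', k', hne, hs, h0⟩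
    rw [hs, SimpleGraph.mem_edgeSet]
    exact ⟨hne, h0⟩

variable {𝕜} [Fintype ι] {v : ι → E} {c : ℝ}

theorem degree_orthogonalityGraph_add_mul_sum_norm_inner_sq
    [DecidableRel (orthogonalityGraph 𝕜 v).Adj] (hv : ∀ j, ‖v j‖ = 1)
    (hangles : ∀ j k, j ≠ k → ‖⟪v j, v k⟫_𝕜‖ ^ 2 = 0 ∨ ‖⟪v j, v k⟫_𝕜‖ ^ 2 = 1 / c) (j : ι) :
    ((orthogonalityGraph 𝕜 v).degree j : ℝ) + c * ∑ k, ‖⟪v j, v k⟫_𝕜‖ ^ 2 =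
      Fintype.card ι + c - 1 := by
  classical
  have hterm : ∀ k, ((if (orthogonalityGraph 𝕜 v).Adj j k then 1 else 0 : ℕ) : ℝ) +
      c * ‖⟪v j, v k⟫_𝕜‖ ^ 2 = 1 + if k = j then c - 1 else 0 := by
    intro k
    by_cases hkj : k = j
    · subst hkj
      simp [inner_self_eq_norm_sq_to_K, hv]
    by_cases h0 : ⟪v j, v k⟫_𝕜 = 0
    · simp [hkj, Ne.symm hkj, h0]
    have hsq : ‖⟪v j, v k⟫_𝕜‖ ^ 2 = 1 / c :=
      (hangles j k (Ne.symm hkj)).resolve_left (by simpa using h0)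
    -- `1 / 0 = 0`, so for `c = 0` the angle condition forces orthogonality
    have hc : c ≠ 0 := by
      rintro rfl
      simp_all
    simp [hkj, h0, hsq, hc]
  rw [← SimpleGraph.card_neighborFinset_eq_degree, SimpleGraph.neighborFinset_eq_filter,
    card_filter, Nat.cast_sum, mul_sum, ← sum_add_distrib, sum_congr rfl fun k _ ↦ hterm k,
    sum_add_distrib, sum_ite_eq']
  simp only [sum_const, card_univ, nsmul_eq_mul, mul_one, mem_univ, ↓reduceIte]
  ring

theorem two_mul_ncard_edgeSet_orthogonalityGraph_add_mul_sum_norm_inner_sq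
    (hv : ∀ j, ‖v j‖ = 1)
    (hangles : ∀ j k, j ≠ k → ‖⟪v j, v k⟫_𝕜‖ ^ 2 = 0 ∨ ‖⟪v j, v k⟫_𝕜‖ ^ 2 = 1 / c) :
    2 * ((orthogonalityGraph 𝕜 v).edgeSet.ncard : ℝ) + c * ∑ j, ∑ k, ‖⟪v j, v k⟫_𝕜‖ ^ 2 =
      Fintype.card ι * (Fintype.card ι + c - 1) := by
  classical
  rw [← SimpleGraph.coe_edgeFinset, Set.ncard_coe_finset, ← Nat.cast_ofNat, ← Nat.cast_mul,
    ← SimpleGraph.sum_degrees_eq_twice_card_edges, Nat.cast_sum, mul_sum, ← sum_add_distrib,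
    sum_congr rfl fun j _ ↦ degree_orthogonalityGraph_add_mul_sum_norm_inner_sq hv hangles j]
  simp only [sum_sub_distrib, sum_const, card_univ, smul_add, nsmul_eq_mul, mul_one]
  ring

end OrthogonalityGraph

theorem card_orthogonal_pairs_le_general
    (d n : ℕ) (hn : n = d * (d + 1))
    (b : Fin n → EuclideanSpace ℂ (Fin d))
    (hnorm : ∀ j, ‖b j‖ = 1)
    (hangles : ∀ j k, j ≠ k →
      ‖(inner ℂ (b j) (b k) : ℂ)‖ ^ 2 = 0 ∨ ‖(inner ℂ (b j) (b k) : ℂ)‖ ^ 2 = 1 / d) :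
    {s : Sym2 (Fin n) | ∃ j k, j ≠ k ∧ s = s(j, k) ∧ (inner ℂ (b j) (b k) : ℂ) = 0}.ncard ≤
      (d + 1) * d * (d - 1) / 2 := by
  rw [← edgeSet_orthogonalityGraph]
  set m := (orthogonalityGraph ℂ b).edgeSet.ncard
  have hframe := sq_sum_norm_sq_le_finrank_mul_sum_norm_inner_sq (𝕜 := ℂ) b
  have hcount := two_mul_ncard_edgeSet_orthogonalityGraph_add_mul_sum_norm_inner_sq hnorm hangles
  simp only [hnorm, one_pow, sum_const, card_univ, Fintype.card_fin, finrank_euclideanSpace_fin,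
    nsmul_eq_mul, mul_one] at hframe hcount
  have hm : 2 * m + n ≤ n * d := by
    have : (2 * m + n : ℝ) ≤ n * d := by linarith
    exact_mod_cast this
  subst hn
  rw [Nat.le_div_iff_mul_le two_pos, Nat.mul_sub_one, Nat.mul_comm (d + 1)]
  omega

/-- Let `d ≥ 1`, `n = d(d+1)`, and let `b 1, …, b n` be unit vectors in `ℂ^d`
such that for every `j ≠ k`, `|⟨b j, b k⟩|²` equals either `0` or `1/d`.  Then the number of
unordered pairs `{j,k}`, `j ≠ k`, with `⟨b j, b k⟩ = 0` is at most `(d+1)·d·(d-1)/2`. -/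
theorem card_orthogonal_pairs_le
    (d n : ℕ) (hd : 1 ≤ d) (hn : n = d * (d + 1))
    (b : Fin n → EuclideanSpace ℂ (Fin d))
    (hnorm : ∀ j, ‖b j‖ = 1)
    (hangles : ∀ j k, j ≠ k →
      ‖(inner ℂ (b j) (b k) : ℂ)‖ ^ 2 = 0 ∨ ‖(inner ℂ (b j) (b k) : ℂ)‖ ^ 2 = 1 / d) :
    {s : Sym2 (Fin n) | ∃ j k, j ≠ k ∧ s = s(j, k) ∧ (inner ℂ (b j) (b k) : ℂ) = 0}.ncard ≤
      (d + 1) * d * (d - 1) / 2 :=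
  card_orthogonal_pairs_le_general d n hn b hnorm hangles
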